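/- Let ε ∈ k and let X1, X2, X3, Z1, Z2 be linearly independent elements of n_5(k) satisfying [X1,X2] = X3, [X1,X3] = Z1, [X2,X3] = Z2, and [Xi, Zj] = 0 for all i ∈ {1,2,3} and j ∈ {1,2}. Suppose X4 ∈ n_5(k) is such that {X1, X2, X3, X4, Z1, Z2} is linearly independent and [X1, X4] = ε·Z2, [X2, X4] = Z1, [X3, X4] = 0, and [Zj, X4] = 0 for j = 1, 2. Then there exists a ∈ k with a² = ε. -/

import Mathlib

attribute [local instance 100] LieRing.ofAssociativeRing

/-- The Lie algebra `n_n(k)` of strictly upper triangular `n × n` matrices over `k`. -/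
def strictUpper (k : Type*) [Field k] (n : ℕ) :
    LieSubalgebra k (Matrix (Fin n) (Fin n) k) where
  carrier := {A | ∀ i j : Fin n, j ≤ i → A i j = 0}
  add_mem' := by
    intro A B hA hB i j hij
    simp [Matrix.add_apply, hA i j hij, hB i j hij]
  zero_mem' := by intro i j hij; simp
  smul_mem' := by
    intro c A hA i j hij
    simp [Matrix.smul_apply, hA i j hij]
  lie_mem' := by
    intro A B hA hB i j hij
    have key : ∀ (X Y : Matrix (Fin n) (Fin n) k),
        (∀ i j : Fin n, j ≤ i → X i j = 0) → (∀ i j : Fin n, j ≤ i → Y i j = 0) →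
        (X * Y) i j = 0 := by
      intro X Y hX hY
      rw [Matrix.mul_apply]
      apply Finset.sum_eq_zero
      intro l _
      by_cases h : l ≤ i
      · rw [hX i l h, zero_mul]
      · push_neg at h
        rw [hY l j (hij.trans h.le), mul_zero]
    have hbr : ⁅A, B⁆ = A * B - B * A := Ring.lie_def A B
    rw [hbr, Matrix.sub_apply, key A B hA hB, key B A hB hA, sub_zero]

/-!
Write `C^m` for the matrices vanishing below the `m`-th superdiagonal, so `n_5(k) = C^1` and
`⁅C^p, C^q⁆ ⊆ C^(p+q)`. Then `X3 ∈ C^2` and `Z1, Z2 ∈ C^3`; since `C^4` is a line, the `(0,3)` and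
`(1,4)` entries of `Z1, Z2` do not all vanish. With that, the conditions `⁅Xi, X4⁆ ∈ C^3` force
`X4 ∈ C^2`, and `⁅Xi, Zj⁆ = 0` makes the vectors `(Zj 0 3, Zj 1 4)` proportional. If they lie on
the `(0,3)`-axis, the `(0,3)` and `(0,4)` entries of `⁅X1, X4⁆ = ε • Z2` and `⁅X2, X4⁆ = Z1` give
`ε = (X1 0 1 / X2 0 1)²`; the `(1,4)`-axis is the mirror image of this case under the
anti-transpose automorphism; otherwise the `(0,3)` and `(1,4)` entries alone give
`ε = (X1 1 2 / X2 1 2)²`.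
-/

theorem eq_zero_of_mul_eq_zero_of_not_and {M₀ : Type*} [MulZeroClass M₀] [NoZeroDivisors M₀]
    {x y z : M₀} (h : ¬(y = 0 ∧ z = 0)) (hy : y * x = 0) (hz : z * x = 0) : x = 0 := by
  by_contra hx
  exact h ⟨(mul_eq_zero.1 hy).resolve_right hx, (mul_eq_zero.1 hz).resolve_right hx⟩

namespace Matrix

variable {R : Type*} {n : ℕ}

/-- For `m ≥ 1` these matrices form the `m`-th term of the lower central series of `n_n`. -/
def IsUpperOfDepth [Zero R] (m : ℕ) (A : Matrix (Fin n) (Fin n) R) : Prop :=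
  ∀ i j : Fin n, (j : ℕ) < i + m → A i j = 0

theorem IsUpperOfDepth.mul [NonUnitalNonAssocSemiring R] {p q : ℕ}
    {A B : Matrix (Fin n) (Fin n) R} (hA : IsUpperOfDepth p A) (hB : IsUpperOfDepth q B) :
    IsUpperOfDepth (p + q) (A * B) := by
  intro i j hij
  rw [mul_apply]
  refine Finset.sum_eq_zero fun l _ => ?_
  by_cases hl : (l : ℕ) < i + p
  · rw [hA i l hl, zero_mul]
  · rw [hB l j (by omega), mul_zero]

theorem IsUpperOfDepth.lie [Ring R] {p q : ℕ} {A B : Matrix (Fin n) (Fin n) R}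
    (hA : IsUpperOfDepth p A) (hB : IsUpperOfDepth q B) : IsUpperOfDepth (p + q) ⁅A, B⁆ := by
  intro i j hij
  rw [Ring.lie_def, sub_apply, hA.mul hB i j hij, hB.mul hA i j (by omega), sub_zero]

theorem IsUpperOfDepth.succ [Zero R] {m : ℕ} {A : Matrix (Fin n) (Fin n) R}
    (hA : IsUpperOfDepth m A) (h : ∀ i j : Fin n, (j : ℕ) = i + m → A i j = 0) :
    IsUpperOfDepth (m + 1) A := fun i j hij =>
  (Nat.lt_or_eq_of_le (Nat.lt_succ_iff.1 hij)).elim (hA i j) (h i j)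

theorem isUpperOfDepth_one_of_mem_strictUpper {k : Type*} [Field k]
    {A : Matrix (Fin n) (Fin n) k} (hA : A ∈ strictUpper k n) : IsUpperOfDepth 1 A :=
  fun i j hij => hA i j (Fin.le_iff_val_le_val.2 (by omega))

/-- The reflection in the antidiagonal, negated so that it preserves the bracket. -/
def antiTranspose [CommRing R] : Matrix (Fin n) (Fin n) R ≃ₗ⁅R⁆ Matrix (Fin n) (Fin n) R where
  toFun A := -(reindex Fin.revPerm Fin.revPerm A)ᵀ
  invFun A := -(reindex Fin.revPerm Fin.revPerm A)ᵀ
  map_add' A B := by ext; simp [add_comm]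
  map_smul' c A := by ext; simp
  map_lie' {A B} := by
    rw [← reindexLieEquiv_apply, LieEquiv.map_lie, lie_transpose, reindexLieEquiv_apply,
      reindexLieEquiv_apply, neg_lie, lie_neg, neg_neg, ← lie_skew, neg_neg]
  left_inv A := by ext; simp
  right_inv A := by ext; simp

theorem antiTranspose_apply [CommRing R] (A : Matrix (Fin n) (Fin n) R) (i j : Fin n) :
    antiTranspose A i j = -A j.rev i.rev := rfl

theorem IsUpperOfDepth.antiTranspose [CommRing R] {m : ℕ} {A : Matrix (Fin n) (Fin n) R}
    (hA : IsUpperOfDepth m A) : IsUpperOfDepth m (antiTranspose A) := by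
  intro i j hij
  rw [antiTranspose_apply, hA _ _ (by simp only [Fin.val_rev]; omega), neg_zero]

section FinFive

variable {k : Type*} [Field k]

theorem mul_eq_mul_of_lie_eq_zero {A Z : Matrix (Fin 5) (Fin 5) k} (hA : IsUpperOfDepth 1 A)
    (hZ : IsUpperOfDepth 3 Z) (h : ⁅A, Z⁆ = 0) : A 0 1 * Z 1 4 = Z 0 3 * A 3 4 := by
  have h04 := congr_fun₂ h 0 4
  simp (disch := decide) only [Ring.lie_def, Matrix.sub_apply, mul_apply, Fin.sum_univ_five, hA _ _,
      hZ _ _, zero_mul, mul_zero, add_zero, zero_add, Matrix.zero_apply] at h04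
  linear_combination h04

theorem det_ne_zero_of_linearIndependent {Z1 Z2 : Matrix (Fin 5) (Fin 5) k}
    (hZ1 : IsUpperOfDepth 3 Z1) (hZ2 : IsUpperOfDepth 3 Z2) (h1 : Z1 1 4 = 0) (h2 : Z2 1 4 = 0)
    (hli : LinearIndependent k ![Z1, Z2]) : Z1 0 3 * Z2 0 4 - Z1 0 4 * Z2 0 3 ≠ 0 := by
  have hrows : LinearIndependent k (!![Z1 0 3, Z1 0 4; Z2 0 3, Z2 0 4]).row := by
    refine LinearIndependent.pair_iff.2 fun s t hst => LinearIndependent.pair_iff.1 hli s t ?_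
    have h03 := congr_fun hst 0
    have h04 := congr_fun hst 1
    simp only [smul_cons, smul_eq_mul, smul_empty, Pi.add_apply, cons_val_zero, Pi.zero_apply,
      cons_val_one, cons_val_fin_one] at h03 h04
    ext i j
    fin_cases i <;> fin_cases j <;> simp [hZ1 _ _, hZ2 _ _, h1, h2, h03, h04]
  simpa [det_fin_two] using
    ((isUnit_iff_isUnit_det _).1 (linearIndependent_rows_iff_isUnit.1 hrows)).ne_zero

end FinFive

end Matrix

open Matrix

structure IsL624Realization {k : Type*} [Field k] (ε : k)
    (X1 X2 X3 X4 Z1 Z2 : Matrix (Fin 5) (Fin 5) k) : Prop where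
  isUpperOfDepth_X1 : IsUpperOfDepth 1 X1
  isUpperOfDepth_X2 : IsUpperOfDepth 1 X2
  isUpperOfDepth_X4 : IsUpperOfDepth 1 X4
  lie_X1_X2 : ⁅X1, X2⁆ = X3
  lie_X1_X3 : ⁅X1, X3⁆ = Z1
  lie_X2_X3 : ⁅X2, X3⁆ = Z2
  lie_X1_X4 : ⁅X1, X4⁆ = ε • Z2
  lie_X2_X4 : ⁅X2, X4⁆ = Z1
  lie_X1_Z1 : ⁅X1, Z1⁆ = 0
  lie_X1_Z2 : ⁅X1, Z2⁆ = 0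
  lie_X2_Z1 : ⁅X2, Z1⁆ = 0
  lie_X2_Z2 : ⁅X2, Z2⁆ = 0
  linearIndependent_Z : LinearIndependent k ![Z1, Z2]

namespace IsL624Realization

variable {k : Type*} [Field k] {ε : k} {X1 X2 X3 X4 Z1 Z2 : Matrix (Fin 5) (Fin 5) k}

theorem antiTranspose (h : IsL624Realization ε X1 X2 X3 X4 Z1 Z2) :
    IsL624Realization ε (antiTranspose X1) (antiTranspose X2) (antiTranspose X3)
      (antiTranspose X4) (antiTranspose Z1) (antiTranspose Z2) where
  isUpperOfDepth_X1 := h.isUpperOfDepth_X1.antiTranspose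
  isUpperOfDepth_X2 := h.isUpperOfDepth_X2.antiTranspose
  isUpperOfDepth_X4 := h.isUpperOfDepth_X4.antiTranspose
  lie_X1_X2 := by rw [← LieEquiv.map_lie, h.lie_X1_X2]
  lie_X1_X3 := by rw [← LieEquiv.map_lie, h.lie_X1_X3]
  lie_X2_X3 := by rw [← LieEquiv.map_lie, h.lie_X2_X3]
  lie_X1_X4 := by rw [← LieEquiv.map_lie, h.lie_X1_X4, map_smul]
  lie_X2_X4 := by rw [← LieEquiv.map_lie, h.lie_X2_X4]
  lie_X1_Z1 := by rw [← LieEquiv.map_lie, h.lie_X1_Z1, map_zero]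
  lie_X1_Z2 := by rw [← LieEquiv.map_lie, h.lie_X1_Z2, map_zero]
  lie_X2_Z1 := by rw [← LieEquiv.map_lie, h.lie_X2_Z1, map_zero]
  lie_X2_Z2 := by rw [← LieEquiv.map_lie, h.lie_X2_Z2, map_zero]
  linearIndependent_Z := by
    refine LinearIndependent.pair_iff.2 fun s t hst => LinearIndependent.pair_iff.1
      h.linearIndependent_Z s t (Matrix.antiTranspose.injective ?_)
    rwa [map_add, map_smul, map_smul, map_zero]

theorem isUpperOfDepth_X3 (h : IsL624Realization ε X1 X2 X3 X4 Z1 Z2) : IsUpperOfDepth 2 X3 :=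
  h.lie_X1_X2 ▸ h.isUpperOfDepth_X1.lie h.isUpperOfDepth_X2

theorem isUpperOfDepth_Z1 (h : IsL624Realization ε X1 X2 X3 X4 Z1 Z2) : IsUpperOfDepth 3 Z1 :=
  h.lie_X1_X3 ▸ h.isUpperOfDepth_X1.lie h.isUpperOfDepth_X3

theorem isUpperOfDepth_Z2 (h : IsL624Realization ε X1 X2 X3 X4 Z1 Z2) : IsUpperOfDepth 3 Z2 :=
  h.lie_X2_X3 ▸ h.isUpperOfDepth_X2.lie h.isUpperOfDepth_X3

theorem X3_apply_zero_two (h : IsL624Realization ε X1 X2 X3 X4 Z1 Z2) :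
    X3 0 2 = X1 0 1 * X2 1 2 - X2 0 1 * X1 1 2 := by
  rw [← h.lie_X1_X2]
  simp (disch := decide) only [Ring.lie_def, Matrix.sub_apply, mul_apply, Fin.sum_univ_five,
      h.isUpperOfDepth_X1 _ _, h.isUpperOfDepth_X2 _ _, zero_mul, mul_zero, add_zero, zero_add]

theorem X3_apply_one_three (h : IsL624Realization ε X1 X2 X3 X4 Z1 Z2) :
    X3 1 3 = X1 1 2 * X2 2 3 - X2 1 2 * X1 2 3 := by
  rw [← h.lie_X1_X2]
  simp (disch := decide) only [Ring.lie_def, Matrix.sub_apply, mul_apply, Fin.sum_univ_five,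
      h.isUpperOfDepth_X1 _ _, h.isUpperOfDepth_X2 _ _, zero_mul, mul_zero, add_zero, zero_add]

theorem X3_apply_two_four (h : IsL624Realization ε X1 X2 X3 X4 Z1 Z2) :
    X3 2 4 = X1 2 3 * X2 3 4 - X2 2 3 * X1 3 4 := by
  rw [← h.lie_X1_X2]
  simp (disch := decide) only [Ring.lie_def, Matrix.sub_apply, mul_apply, Fin.sum_univ_five,
      h.isUpperOfDepth_X1 _ _, h.isUpperOfDepth_X2 _ _, zero_mul, mul_zero, add_zero, zero_add]

theorem X3_apply_one_four (h : IsL624Realization ε X1 X2 X3 X4 Z1 Z2) :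
    X3 1 4 = X1 1 2 * X2 2 4 + X1 1 3 * X2 3 4 - X2 1 2 * X1 2 4 - X2 1 3 * X1 3 4 := by
  rw [← h.lie_X1_X2]
  simp (disch := decide) only [Ring.lie_def, Matrix.sub_apply, mul_apply, Fin.sum_univ_five,
      h.isUpperOfDepth_X1 _ _, h.isUpperOfDepth_X2 _ _, zero_mul, mul_zero, add_zero, zero_add]
  ring

theorem Z1_apply_zero_three (h : IsL624Realization ε X1 X2 X3 X4 Z1 Z2) :
    Z1 0 3 = X1 0 1 * X3 1 3 - X3 0 2 * X1 2 3 := by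
  rw [← h.lie_X1_X3]
  simp (disch := decide) only [Ring.lie_def, Matrix.sub_apply, mul_apply, Fin.sum_univ_five,
      h.isUpperOfDepth_X1 _ _, h.isUpperOfDepth_X3 _ _, zero_mul, mul_zero, add_zero, zero_add]

theorem Z1_apply_one_four (h : IsL624Realization ε X1 X2 X3 X4 Z1 Z2) :
    Z1 1 4 = X1 1 2 * X3 2 4 - X3 1 3 * X1 3 4 := by
  rw [← h.lie_X1_X3]
  simp (disch := decide) only [Ring.lie_def, Matrix.sub_apply, mul_apply, Fin.sum_univ_five,
      h.isUpperOfDepth_X1 _ _, h.isUpperOfDepth_X3 _ _, zero_mul, mul_zero, add_zero, zero_add]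

theorem Z1_apply_zero_four (h : IsL624Realization ε X1 X2 X3 X4 Z1 Z2) :
    Z1 0 4 = X1 0 1 * X3 1 4 + X1 0 2 * X3 2 4 - X3 0 2 * X1 2 4 - X3 0 3 * X1 3 4 := by
  rw [← h.lie_X1_X3]
  simp (disch := decide) only [Ring.lie_def, Matrix.sub_apply, mul_apply, Fin.sum_univ_five,
      h.isUpperOfDepth_X1 _ _, h.isUpperOfDepth_X3 _ _, zero_mul, mul_zero, add_zero, zero_add]
  ring

theorem Z2_apply_zero_three (h : IsL624Realization ε X1 X2 X3 X4 Z1 Z2) :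
    Z2 0 3 = X2 0 1 * X3 1 3 - X3 0 2 * X2 2 3 := by
  rw [← h.lie_X2_X3]
  simp (disch := decide) only [Ring.lie_def, Matrix.sub_apply, mul_apply, Fin.sum_univ_five,
      h.isUpperOfDepth_X2 _ _, h.isUpperOfDepth_X3 _ _, zero_mul, mul_zero, add_zero, zero_add]

theorem Z2_apply_one_four (h : IsL624Realization ε X1 X2 X3 X4 Z1 Z2) :
    Z2 1 4 = X2 1 2 * X3 2 4 - X3 1 3 * X2 3 4 := by
  rw [← h.lie_X2_X3]
  simp (disch := decide) only [Ring.lie_def, Matrix.sub_apply, mul_apply, Fin.sum_univ_five,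
      h.isUpperOfDepth_X2 _ _, h.isUpperOfDepth_X3 _ _, zero_mul, mul_zero, add_zero, zero_add]

theorem Z2_apply_zero_four (h : IsL624Realization ε X1 X2 X3 X4 Z1 Z2) :
    Z2 0 4 = X2 0 1 * X3 1 4 + X2 0 2 * X3 2 4 - X3 0 2 * X2 2 4 - X3 0 3 * X2 3 4 := by
  rw [← h.lie_X2_X3]
  simp (disch := decide) only [Ring.lie_def, Matrix.sub_apply, mul_apply, Fin.sum_univ_five,
      h.isUpperOfDepth_X2 _ _, h.isUpperOfDepth_X3 _ _, zero_mul, mul_zero, add_zero, zero_add]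
  ring

theorem X1_X4_minors (h : IsL624Realization ε X1 X2 X3 X4 Z1 Z2) :
    X1 0 1 * X4 1 2 = X4 0 1 * X1 1 2 ∧ X1 1 2 * X4 2 3 = X4 1 2 * X1 2 3 ∧
      X1 2 3 * X4 3 4 = X4 2 3 * X1 3 4 := by
  have h02 := congr_fun₂ h.lie_X1_X4 0 2
  have h13 := congr_fun₂ h.lie_X1_X4 1 3
  have h24 := congr_fun₂ h.lie_X1_X4 2 4
  simp (disch := decide) only [Ring.lie_def, Matrix.sub_apply, mul_apply, Fin.sum_univ_five,
      h.isUpperOfDepth_X1 _ _, h.isUpperOfDepth_X4 _ _, h.isUpperOfDepth_Z2 _ _, Matrix.smul_apply,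
      smul_eq_mul, zero_mul, mul_zero, add_zero, zero_add] at h02 h13 h24
  exact ⟨by linear_combination h02, by linear_combination h13, by linear_combination h24⟩

theorem X2_X4_minors (h : IsL624Realization ε X1 X2 X3 X4 Z1 Z2) :
    X2 0 1 * X4 1 2 = X4 0 1 * X2 1 2 ∧ X2 1 2 * X4 2 3 = X4 1 2 * X2 2 3 ∧
      X2 2 3 * X4 3 4 = X4 2 3 * X2 3 4 := by
  have h02 := congr_fun₂ h.lie_X2_X4 0 2
  have h13 := congr_fun₂ h.lie_X2_X4 1 3
  have h24 := congr_fun₂ h.lie_X2_X4 2 4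
  simp (disch := decide) only [Ring.lie_def, Matrix.sub_apply, mul_apply, Fin.sum_univ_five,
      h.isUpperOfDepth_X2 _ _, h.isUpperOfDepth_X4 _ _, h.isUpperOfDepth_Z1 _ _, zero_mul, mul_zero,
      add_zero, zero_add] at h02 h13 h24
  exact ⟨by linear_combination h02, by linear_combination h13, by linear_combination h24⟩

theorem not_Z_apply_eq_zero (h : IsL624Realization ε X1 X2 X3 X4 Z1 Z2) :
    ¬(Z1 0 3 = 0 ∧ Z1 1 4 = 0 ∧ Z2 0 3 = 0 ∧ Z2 1 4 = 0) := fun ⟨hu1, hu2, hv1, hv2⟩ =>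
  det_ne_zero_of_linearIndependent h.isUpperOfDepth_Z1 h.isUpperOfDepth_Z2 hu2 hv2
    h.linearIndependent_Z (by rw [hu1, hv1]; ring)

theorem X4_apply_one_two_and_two_three_eq_zero (h : IsL624Realization ε X1 X2 X3 X4 Z1 Z2) :
    X4 1 2 = 0 ∧ X4 2 3 = 0 := by
  obtain ⟨K1, K2, K3⟩ := h.X1_X4_minors
  obtain ⟨L1, L2, L3⟩ := h.X2_X4_minors
  have hp := h.X3_apply_zero_two
  have hq := h.X3_apply_one_three
  have hr := h.X3_apply_two_four
  -- a nonzero middle entry of the superdiagonal of `X4` forces `X3 ∈ C^3`, so `Z1, Z2 ∈ C^4`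
  have hZ : X3 0 2 = 0 → X3 1 3 = 0 → X3 2 4 = 0 → False := fun hp0 hq0 hr0 =>
    h.not_Z_apply_eq_zero <| by
      simp [h.Z1_apply_zero_three, h.Z1_apply_one_four, h.Z2_apply_zero_three,
        h.Z2_apply_one_four, hp0, hq0, hr0]
  have hd1 : X4 1 2 = 0 := by
    by_contra hd1
    have hq0 : X3 1 3 = 0 := mul_left_cancel₀ hd1 <| by
      linear_combination X4 1 2 * hq - X1 1 2 * L2 + X2 1 2 * K2
    refine hZ (mul_left_cancel₀ hd1 ?_) hq0 (mul_left_cancel₀ hd1 ?_)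
    · linear_combination X4 1 2 * hp + X2 1 2 * K1 - X1 1 2 * L1
    · linear_combination X4 1 2 * hr - X2 3 4 * K2 + X1 3 4 * L2 - X1 1 2 * L3 + X2 1 2 * K3
        - X4 3 4 * hq + X4 3 4 * hq0
  refine ⟨hd1, ?_⟩
  by_contra hd2
  refine hZ (mul_left_cancel₀ hd2 ?_) (mul_left_cancel₀ hd2 ?_) (mul_left_cancel₀ hd2 ?_)
  · linear_combination X4 2 3 * hp + X1 0 1 * L2 - X2 0 1 * K2
      + (X1 0 1 * X2 2 3 - X2 0 1 * X1 2 3) * hd1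
  · linear_combination X4 2 3 * hq + X2 2 3 * K2 - X1 2 3 * L2
  · linear_combination X4 2 3 * hr - X1 2 3 * L3 + X2 2 3 * K3

theorem isUpperOfDepth_two_X4 (h : IsL624Realization ε X1 X2 X3 X4 Z1 Z2) :
    IsUpperOfDepth 2 X4 := by
  obtain ⟨hd1, hd2⟩ := h.X4_apply_one_two_and_two_three_eq_zero
  obtain ⟨K1, -, K3⟩ := h.X1_X4_minors
  obtain ⟨L1, -, L3⟩ := h.X2_X4_minors
  have hZ := h.not_Z_apply_eq_zero
  rw [h.Z1_apply_zero_three, h.Z1_apply_one_four, h.Z2_apply_zero_three,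
    h.Z2_apply_one_four] at hZ
  have hd0 : X4 0 1 = 0 := by
    by_contra hd0
    have ha1 : X1 1 2 = 0 := mul_left_cancel₀ hd0 <| by linear_combination -K1 + X1 0 1 * hd1
    have hb1 : X2 1 2 = 0 := mul_left_cancel₀ hd0 <| by linear_combination -L1 + X2 0 1 * hd1
    exact hZ (by simp [h.X3_apply_zero_two, h.X3_apply_one_three, ha1, hb1])
  have hd3 : X4 3 4 = 0 := by
    by_contra hd3
    have ha2 : X1 2 3 = 0 := mul_left_cancel₀ hd3 <| by linear_combination K3 + X1 3 4 * hd2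
    have hb2 : X2 2 3 = 0 := mul_left_cancel₀ hd3 <| by linear_combination L3 + X2 3 4 * hd2
    exact hZ (by simp [h.X3_apply_one_three, h.X3_apply_two_four, ha2, hb2])
  refine h.isUpperOfDepth_X4.succ fun i j hij => ?_
  fin_cases i <;> fin_cases j <;> first | assumption | exact absurd hij (by decide)

theorem lie_X1_X4_apply (h : IsL624Realization ε X1 X2 X3 X4 Z1 Z2) :
    X1 0 1 * X4 1 3 - X4 0 2 * X1 2 3 = ε * Z2 0 3 ∧
      X1 1 2 * X4 2 4 - X4 1 3 * X1 3 4 = ε * Z2 1 4 ∧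
      X1 0 1 * X4 1 4 + X1 0 2 * X4 2 4 - X4 0 2 * X1 2 4 - X4 0 3 * X1 3 4 = ε * Z2 0 4 := by
  have h03 := congr_fun₂ h.lie_X1_X4 0 3
  have h14 := congr_fun₂ h.lie_X1_X4 1 4
  have h04 := congr_fun₂ h.lie_X1_X4 0 4
  simp (disch := decide) only [Ring.lie_def, Matrix.sub_apply, mul_apply, Fin.sum_univ_five,
      h.isUpperOfDepth_X1 _ _, h.isUpperOfDepth_two_X4 _ _, Matrix.smul_apply, smul_eq_mul,
      zero_mul, mul_zero, add_zero, zero_add] at h03 h14 h04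
  exact ⟨by linear_combination h03, by linear_combination h14, by linear_combination h04⟩

theorem lie_X2_X4_apply (h : IsL624Realization ε X1 X2 X3 X4 Z1 Z2) :
    X2 0 1 * X4 1 3 - X4 0 2 * X2 2 3 = Z1 0 3 ∧
      X2 1 2 * X4 2 4 - X4 1 3 * X2 3 4 = Z1 1 4 ∧
      X2 0 1 * X4 1 4 + X2 0 2 * X4 2 4 - X4 0 2 * X2 2 4 - X4 0 3 * X2 3 4 = Z1 0 4 := by
  have h03 := congr_fun₂ h.lie_X2_X4 0 3
  have h14 := congr_fun₂ h.lie_X2_X4 1 4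
  have h04 := congr_fun₂ h.lie_X2_X4 0 4
  simp (disch := decide) only [Ring.lie_def, Matrix.sub_apply, mul_apply, Fin.sum_univ_five,
      h.isUpperOfDepth_X2 _ _, h.isUpperOfDepth_two_X4 _ _, zero_mul, mul_zero, add_zero,
      zero_add] at h03 h14 h04
  exact ⟨by linear_combination h03, by linear_combination h14, by linear_combination h04⟩

theorem Z1_apply_mul_Z2_apply (h : IsL624Realization ε X1 X2 X3 X4 Z1 Z2) :
    Z1 0 3 * Z2 1 4 = Z1 1 4 * Z2 0 3 := by
  by_contra hne
  have hD : Z1 0 3 * Z2 1 4 - Z1 1 4 * Z2 0 3 ≠ 0 := sub_ne_zero.2 hne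
  have hua := mul_eq_mul_of_lie_eq_zero h.isUpperOfDepth_X1 h.isUpperOfDepth_Z1 h.lie_X1_Z1
  have hva := mul_eq_mul_of_lie_eq_zero h.isUpperOfDepth_X1 h.isUpperOfDepth_Z2 h.lie_X1_Z2
  have hub := mul_eq_mul_of_lie_eq_zero h.isUpperOfDepth_X2 h.isUpperOfDepth_Z1 h.lie_X2_Z1
  have hvb := mul_eq_mul_of_lie_eq_zero h.isUpperOfDepth_X2 h.isUpperOfDepth_Z2 h.lie_X2_Z2
  have ha0 : X1 0 1 = 0 := mul_right_cancel₀ hD <| by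
    linear_combination Z1 0 3 * hva - Z2 0 3 * hua
  have ha3 : X1 3 4 = 0 := mul_right_cancel₀ hD <| by
    linear_combination Z1 1 4 * hva - Z2 1 4 * hua
  have hb0 : X2 0 1 = 0 := mul_right_cancel₀ hD <| by
    linear_combination Z1 0 3 * hvb - Z2 0 3 * hub
  have hb3 : X2 3 4 = 0 := mul_right_cancel₀ hD <| by
    linear_combination Z1 1 4 * hvb - Z2 1 4 * hub
  apply hne
  rw [h.Z1_apply_zero_three, h.Z1_apply_one_four, h.X3_apply_zero_two, h.X3_apply_two_four,
    ha0, ha3, hb0, hb3]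
  ring

theorem X_apply_three_four_eq_zero (h : IsL624Realization ε X1 X2 X3 X4 Z1 Z2)
    (hu2 : Z1 1 4 = 0) (hv2 : Z2 1 4 = 0) (huv : ¬(Z1 0 3 = 0 ∧ Z2 0 3 = 0)) :
    X1 3 4 = 0 ∧ X2 3 4 = 0 := by
  have hua := mul_eq_mul_of_lie_eq_zero h.isUpperOfDepth_X1 h.isUpperOfDepth_Z1 h.lie_X1_Z1
  have hva := mul_eq_mul_of_lie_eq_zero h.isUpperOfDepth_X1 h.isUpperOfDepth_Z2 h.lie_X1_Z2
  have hub := mul_eq_mul_of_lie_eq_zero h.isUpperOfDepth_X2 h.isUpperOfDepth_Z1 h.lie_X2_Z1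
  have hvb := mul_eq_mul_of_lie_eq_zero h.isUpperOfDepth_X2 h.isUpperOfDepth_Z2 h.lie_X2_Z2
  rw [hu2, mul_zero] at hua hub
  rw [hv2, mul_zero] at hva hvb
  exact ⟨eq_zero_of_mul_eq_zero_of_not_and huv hua.symm hva.symm,
    eq_zero_of_mul_eq_zero_of_not_and huv hub.symm hvb.symm⟩

theorem X4_apply_two_four_eq_zero (h : IsL624Realization ε X1 X2 X3 X4 Z1 Z2)
    (hu2 : Z1 1 4 = 0) (hv2 : Z2 1 4 = 0) (huv : ¬(Z1 0 3 = 0 ∧ Z2 0 3 = 0)) :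
    X4 2 4 = 0 := by
  obtain ⟨ha3, hb3⟩ := h.X_apply_three_four_eq_zero hu2 hv2 huv
  obtain ⟨-, hR4b, -⟩ := h.lie_X1_X4_apply
  obtain ⟨-, hR5b, -⟩ := h.lie_X2_X4_apply
  by_contra hE3
  have ha1 : X1 1 2 = 0 := mul_right_cancel₀ hE3 <| by
    linear_combination hR4b + X4 1 3 * ha3 + ε * hv2
  have hb1 : X2 1 2 = 0 := mul_right_cancel₀ hE3 <| by
    linear_combination hR5b + X4 1 3 * hb3 + hu2
  apply huv
  rw [h.Z1_apply_zero_three, h.Z2_apply_zero_three, h.X3_apply_zero_two, h.X3_apply_one_three,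
    ha1, hb1]
  constructor <;> ring

theorem Z_apply_zero_four_of_X_apply_three_four_eq_zero
    (h : IsL624Realization ε X1 X2 X3 X4 Z1 Z2) (ha3 : X1 3 4 = 0) (hb3 : X2 3 4 = 0) :
    Z1 0 4 = X1 0 1 * (X1 1 2 * X2 2 4 - X2 1 2 * X1 2 4) - X3 0 2 * X1 2 4 ∧
      Z2 0 4 = X2 0 1 * (X1 1 2 * X2 2 4 - X2 1 2 * X1 2 4) - X3 0 2 * X2 2 4 := by
  have hr : X3 2 4 = 0 := by rw [h.X3_apply_two_four, ha3, hb3]; ring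
  have hm : X3 1 4 = X1 1 2 * X2 2 4 - X2 1 2 * X1 2 4 := by
    rw [h.X3_apply_one_four, ha3, hb3]; ring
  exact ⟨by rw [h.Z1_apply_zero_four, hr, hm, ha3]; ring,
    by rw [h.Z2_apply_zero_four, hr, hm, hb3]; ring⟩

theorem exists_sq_eq_of_Z_apply_one_four_eq_zero (h : IsL624Realization ε X1 X2 X3 X4 Z1 Z2)
    (h2 : (2 : k) ≠ 0) (hu2 : Z1 1 4 = 0) (hv2 : Z2 1 4 = 0) : ∃ a : k, a ^ 2 = ε := by
  have hD := det_ne_zero_of_linearIndependent h.isUpperOfDepth_Z1 h.isUpperOfDepth_Z2 hu2 hv2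
    h.linearIndependent_Z
  have huv : ¬(Z1 0 3 = 0 ∧ Z2 0 3 = 0) := fun h0 => hD (by rw [h0.1, h0.2]; ring)
  obtain ⟨ha3, hb3⟩ := h.X_apply_three_four_eq_zero hu2 hv2 huv
  have hE3 := h.X4_apply_two_four_eq_zero hu2 hv2 huv
  obtain ⟨hz1, hz2⟩ := h.Z_apply_zero_four_of_X_apply_three_four_eq_zero ha3 hb3
  obtain ⟨hR4a, -, hR8⟩ := h.lie_X1_X4_apply
  obtain ⟨hR5a, -, hR9⟩ := h.lie_X2_X4_apply
  have hp := h.X3_apply_zero_two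
  have hq := h.X3_apply_one_three
  have hu1 := h.Z1_apply_zero_three
  have hv1 := h.Z2_apply_zero_three
  rw [show Z1 0 3 * Z2 0 4 - Z1 0 4 * Z2 0 3 =
      2 * X3 0 2 ^ 2 * (X1 2 3 * X2 2 4 - X2 2 3 * X1 2 4) by
    rw [hz1, hz2, hu1, hv1, hq, hp]; ring] at hD
  have hp0 : X3 0 2 ≠ 0 := fun h0 => hD (by rw [h0]; ring)
  have hW : X1 2 3 * X2 2 4 - X2 2 3 * X1 2 4 ≠ 0 := right_ne_zero_of_mul hD
  obtain ⟨c, hc⟩ : ∃ c, c = ε * X2 0 1 ^ 2 - X1 0 1 ^ 2 := ⟨_, rfl⟩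
  obtain ⟨α, hα⟩ : ∃ α, α = X4 0 2 * X1 0 1 - X1 1 2 * c + ε * X3 0 2 * X2 0 1 := ⟨_, rfl⟩
  obtain ⟨β, hβ⟩ : ∃ β, β = -X4 0 2 * X2 0 1 + X2 1 2 * c - X3 0 2 * X1 0 1 := ⟨_, rfl⟩
  -- the `(0,3)` and `(0,4)` entries of `X2 0 1 • ⁅X1, X4⁆ - X1 0 1 • ⁅X2, X4⁆`
  have h03 : X2 2 3 * α + X1 2 3 * β = 0 := by
    linear_combination X2 2 3 * hα + X1 2 3 * hβ + X2 0 1 * hR4a - X1 0 1 * hR5a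
      + ε * X2 0 1 * hv1 - X1 0 1 * hu1 - X3 1 3 * hc + c * hq
  have h04 : X2 2 4 * α + X1 2 4 * β = 0 := by
    linear_combination X2 2 4 * hα + X1 2 4 * hβ + X2 0 1 * hR8 - X1 0 1 * hR9
      - (X2 0 1 * X1 0 2 - X1 0 1 * X2 0 2) * hE3 - X4 0 3 * X1 0 1 * hb3
      + X4 0 3 * X2 0 1 * ha3 + ε * X2 0 1 * hz2 - X1 0 1 * hz1
      - (X1 1 2 * X2 2 4 - X2 1 2 * X1 2 4) * hc
  have hα0 : α = 0 := mul_right_cancel₀ hW <| by linear_combination X1 2 3 * h04 - X1 2 4 * h03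
  have hβ0 : β = 0 := mul_right_cancel₀ hW <| by linear_combination X2 2 4 * h03 - X2 2 3 * h04
  have hc0 : c = 0 := by
    have : 2 * X3 0 2 * c = 0 := by
      linear_combination X2 0 1 * hα0 + X1 0 1 * hβ0 - X2 0 1 * hα - X1 0 1 * hβ + c * hp
        + X3 0 2 * hc
    simpa [h2, hp0] using this
  have hb0 : X2 0 1 ≠ 0 := fun h0 => hp0 <| by
    have ha0 : X1 0 1 = 0 :=
      pow_eq_zero_iff two_ne_zero |>.1 (by linear_combination hc - hc0 + ε * X2 0 1 * h0)
    rw [hp, ha0, h0]; ring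
  exact ⟨X1 0 1 / X2 0 1, by field_simp; linear_combination hc - hc0⟩

theorem mul_Z_apply_sub_eq_three_mul (h : IsL624Realization ε X1 X2 X3 X4 Z1 Z2) {w1 w2 : k}
    (ha : X1 0 1 * w2 = w1 * X1 3 4) (hb : X2 0 1 * w2 = w1 * X2 3 4) :
    w2 * Z1 0 3 - w1 * Z1 1 4 = 3 * X3 1 3 * X1 3 4 * w1 ∧
      w2 * Z2 0 3 - w1 * Z2 1 4 = 3 * X3 1 3 * X2 3 4 * w1 := by
  have hp := h.X3_apply_zero_two
  have hq := h.X3_apply_one_three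
  have hr := h.X3_apply_two_four
  refine ⟨?_, ?_⟩
  · linear_combination w2 * h.Z1_apply_zero_three - w1 * h.Z1_apply_one_four
      + (X3 1 3 - X1 2 3 * X2 1 2) * ha + X1 1 2 * X1 2 3 * hb - X1 2 3 * w2 * hp
      - X1 1 2 * w1 * hr - X1 3 4 * w1 * hq
  · linear_combination w2 * h.Z2_apply_zero_three - w1 * h.Z2_apply_one_four
      + (X3 1 3 + X1 1 2 * X2 2 3) * hb - X2 1 2 * X2 2 3 * ha - X2 2 3 * w2 * hp
      - X2 1 2 * w1 * hr - X2 3 4 * w1 * hq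

theorem X3_apply_one_three_eq_zero (h : IsL624Realization ε X1 X2 X3 X4 Z1 Z2)
    (h3 : (3 : k) ≠ 0) (h03 : ¬(Z1 0 3 = 0 ∧ Z2 0 3 = 0)) (h14 : ¬(Z1 1 4 = 0 ∧ Z2 1 4 = 0)) :
    X3 1 3 = 0 := by
  have hua := mul_eq_mul_of_lie_eq_zero h.isUpperOfDepth_X1 h.isUpperOfDepth_Z1 h.lie_X1_Z1
  have hva := mul_eq_mul_of_lie_eq_zero h.isUpperOfDepth_X1 h.isUpperOfDepth_Z2 h.lie_X1_Z2
  have hub := mul_eq_mul_of_lie_eq_zero h.isUpperOfDepth_X2 h.isUpperOfDepth_Z1 h.lie_X2_Z1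
  have hvb := mul_eq_mul_of_lie_eq_zero h.isUpperOfDepth_X2 h.isUpperOfDepth_Z2 h.lie_X2_Z2
  have hpar := h.Z1_apply_mul_Z2_apply
  have hp := h.X3_apply_zero_two
  obtain ⟨hu_u, hv_u⟩ := h.mul_Z_apply_sub_eq_three_mul hua hub
  obtain ⟨hu_v, hv_v⟩ := h.mul_Z_apply_sub_eq_three_mul hva hvb
  have ha3 : X3 1 3 * X1 3 4 = 0 := eq_zero_of_mul_eq_zero_of_not_and h03
    (mul_left_cancel₀ h3 (by linear_combination -hu_u))
    (mul_left_cancel₀ h3 (by linear_combination -hu_v + hpar))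
  have hb3 : X3 1 3 * X2 3 4 = 0 := eq_zero_of_mul_eq_zero_of_not_and h03
    (mul_left_cancel₀ h3 (by linear_combination -hv_u - hpar))
    (mul_left_cancel₀ h3 (by linear_combination -hv_v))
  have ha0 : X3 1 3 * X1 0 1 = 0 := eq_zero_of_mul_eq_zero_of_not_and h14
    (by linear_combination X3 1 3 * hua + Z1 0 3 * ha3)
    (by linear_combination X3 1 3 * hva + Z2 0 3 * ha3)
  have hb0 : X3 1 3 * X2 0 1 = 0 := eq_zero_of_mul_eq_zero_of_not_and h14
    (by linear_combination X3 1 3 * hub + Z1 0 3 * hb3)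
    (by linear_combination X3 1 3 * hvb + Z2 0 3 * hb3)
  by_contra hq0
  simp only [mul_eq_zero, hq0, false_or] at ha0 hb0
  apply h03
  rw [h.Z1_apply_zero_three, h.Z2_apply_zero_three, hp, ha0, hb0]
  constructor <;> ring

theorem mul_identities_of_X3_apply_one_three_eq_zero
    (h : IsL624Realization ε X1 X2 X3 X4 Z1 Z2) (hq0 : X3 1 3 = 0) {w1 w2 : k}
    (ha : X1 0 1 * w2 = w1 * X1 3 4) (hb : X2 0 1 * w2 = w1 * X2 3 4) :
    w1 * (X1 2 3 * (X1 1 2 * X2 3 4 - X1 3 4 * X2 1 2) - X1 1 2 * X3 2 4)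
        = w2 * Z1 0 3 - w1 * Z1 1 4 ∧
      w1 * (X2 2 3 * (X1 1 2 * X2 3 4 - X1 3 4 * X2 1 2) - X2 1 2 * X3 2 4)
        = w2 * Z2 0 3 - w1 * Z2 1 4 ∧
      w1 * (X3 2 4 * X4 1 3 + (X1 1 2 * X2 3 4 - X1 3 4 * X2 1 2)
        * (ε * X2 2 3 ^ 2 - X1 2 3 ^ 2)) = 0 := by
  obtain ⟨hR4a, -, -⟩ := h.lie_X1_X4_apply
  obtain ⟨hR5a, -, -⟩ := h.lie_X2_X4_apply
  have hp := h.X3_apply_zero_two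
  have hr := h.X3_apply_two_four
  have hu1 : Z1 0 3 = -(X3 0 2 * X1 2 3) := by rw [h.Z1_apply_zero_three, hq0]; ring
  have hu2 : Z1 1 4 = X1 1 2 * X3 2 4 := by rw [h.Z1_apply_one_four, hq0]; ring
  have hv1 : Z2 0 3 = -(X3 0 2 * X2 2 3) := by rw [h.Z2_apply_zero_three, hq0]; ring
  have hv2 : Z2 1 4 = X2 1 2 * X3 2 4 := by rw [h.Z2_apply_one_four, hq0]; ring
  refine ⟨?_, ?_, ?_⟩
  · linear_combination -w2 * hu1 + w1 * hu2 + X1 2 3 * (w2 * hp + X2 1 2 * ha - X1 1 2 * hb)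
  · linear_combination -w2 * hv1 + w1 * hv2 + X2 2 3 * (w2 * hp + X2 1 2 * ha - X1 1 2 * hb)
  · linear_combination X4 1 3 * (X2 2 3 * ha - X1 2 3 * hb + w1 * hr)
      + (ε * X2 2 3 ^ 2 - X1 2 3 ^ 2) * (w2 * hp + X2 1 2 * ha - X1 1 2 * hb)
      - w2 * (X2 2 3 * hR4a - X1 2 3 * hR5a + ε * X2 2 3 * hv1 - X1 2 3 * hu1)

theorem exists_sq_eq_of_not_Z_apply_eq_zero (h : IsL624Realization ε X1 X2 X3 X4 Z1 Z2)
    (h2 : (2 : k) ≠ 0) (h3 : (3 : k) ≠ 0) (h03 : ¬(Z1 0 3 = 0 ∧ Z2 0 3 = 0))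
    (h14 : ¬(Z1 1 4 = 0 ∧ Z2 1 4 = 0)) : ∃ a : k, a ^ 2 = ε := by
  have hq0 := h.X3_apply_one_three_eq_zero h3 h03 h14
  have hpar := h.Z1_apply_mul_Z2_apply
  obtain ⟨hs1u, hs2u, hs3u⟩ := h.mul_identities_of_X3_apply_one_three_eq_zero hq0
    (mul_eq_mul_of_lie_eq_zero h.isUpperOfDepth_X1 h.isUpperOfDepth_Z1 h.lie_X1_Z1)
    (mul_eq_mul_of_lie_eq_zero h.isUpperOfDepth_X2 h.isUpperOfDepth_Z1 h.lie_X2_Z1)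
  obtain ⟨hs1v, hs2v, hs3v⟩ := h.mul_identities_of_X3_apply_one_three_eq_zero hq0
    (mul_eq_mul_of_lie_eq_zero h.isUpperOfDepth_X1 h.isUpperOfDepth_Z2 h.lie_X1_Z2)
    (mul_eq_mul_of_lie_eq_zero h.isUpperOfDepth_X2 h.isUpperOfDepth_Z2 h.lie_X2_Z2)
  have hs1 : X1 2 3 * (X1 1 2 * X2 3 4 - X1 3 4 * X2 1 2) - X1 1 2 * X3 2 4 = 0 :=
    eq_zero_of_mul_eq_zero_of_not_and h03 (by linear_combination hs1u)
      (by linear_combination hs1v + hpar)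
  have hs2 : X2 2 3 * (X1 1 2 * X2 3 4 - X1 3 4 * X2 1 2) - X2 1 2 * X3 2 4 = 0 :=
    eq_zero_of_mul_eq_zero_of_not_and h03 (by linear_combination hs2u - hpar)
      (by linear_combination hs2v)
  have hs3 := eq_zero_of_mul_eq_zero_of_not_and h03 hs3u hs3v
  obtain ⟨-, hR4b, -⟩ := h.lie_X1_X4_apply
  obtain ⟨-, hR5b, -⟩ := h.lie_X2_X4_apply
  have hu2 : Z1 1 4 = X1 1 2 * X3 2 4 := by rw [h.Z1_apply_one_four, hq0]; ring
  have hv2 : Z2 1 4 = X2 1 2 * X3 2 4 := by rw [h.Z2_apply_one_four, hq0]; ring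
  have hs4 : (X1 1 2 * X2 3 4 - X1 3 4 * X2 1 2) * X4 1 3 =
      X3 2 4 * (ε * X2 1 2 ^ 2 - X1 1 2 ^ 2) := by
    linear_combination X2 1 2 * hR4b - X1 1 2 * hR5b + ε * X2 1 2 * hv2 - X1 1 2 * hu2
  have hr0 : X3 2 4 ≠ 0 := fun h0 => h14 ⟨by rw [hu2, h0, mul_zero], by rw [hv2, h0, mul_zero]⟩
  have hc : ε * X2 1 2 ^ 2 - X1 1 2 ^ 2 = 0 := by
    have : 2 * X3 2 4 ^ 2 * (ε * X2 1 2 ^ 2 - X1 1 2 ^ 2) = 0 := by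
      linear_combination (X1 1 2 * X2 3 4 - X1 3 4 * X2 1 2) * hs3 - X3 2 4 * hs4
        - ε * (X2 2 3 * (X1 1 2 * X2 3 4 - X1 3 4 * X2 1 2) + X2 1 2 * X3 2 4) * hs2
        + (X1 2 3 * (X1 1 2 * X2 3 4 - X1 3 4 * X2 1 2) + X1 1 2 * X3 2 4) * hs1
    simpa [h2, hr0] using this
  have hb1 : X2 1 2 ≠ 0 := fun h0 => h14 <| by
    have ha1 : X1 1 2 = 0 :=
      pow_eq_zero_iff two_ne_zero |>.1 (by linear_combination -hc + ε * X2 1 2 * h0)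
    exact ⟨by rw [hu2, ha1, zero_mul], by rw [hv2, h0, zero_mul]⟩
  exact ⟨X1 1 2 / X2 1 2, by field_simp; linear_combination -hc⟩

theorem exists_sq_eq (h : IsL624Realization ε X1 X2 X3 X4 Z1 Z2) (h2 : (2 : k) ≠ 0)
    (h3 : (3 : k) ≠ 0) : ∃ a : k, a ^ 2 = ε := by
  by_cases h14 : Z1 1 4 = 0 ∧ Z2 1 4 = 0
  · exact h.exists_sq_eq_of_Z_apply_one_four_eq_zero h2 h14.1 h14.2
  by_cases h03 : Z1 0 3 = 0 ∧ Z2 0 3 = 0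
  · -- the anti-transpose sends the `(0,3)` entry to minus the `(1,4)` entry
    exact h.antiTranspose.exists_sq_eq_of_Z_apply_one_four_eq_zero h2
      (neg_eq_zero.2 h03.1) (neg_eq_zero.2 h03.2)
  exact h.exists_sq_eq_of_not_Z_apply_eq_zero h2 h3 h03 h14

end IsL624Realization

theorem exists_sq_eq_of_L624_relations_general
    (k : Type*) [Field k] [CharZero k] (ε : k)
    (X1 X2 X3 Z1 Z2 X4 : Matrix (Fin 5) (Fin 5) k)
    (hX1 : X1 ∈ strictUpper k 5) (hX2 : X2 ∈ strictUpper k 5) (hX4 : X4 ∈ strictUpper k 5)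
    (h12 : ⁅X1, X2⁆ = X3) (h13 : ⁅X1, X3⁆ = Z1) (h23 : ⁅X2, X3⁆ = Z2)
    (h1Z1 : ⁅X1, Z1⁆ = 0) (h1Z2 : ⁅X1, Z2⁆ = 0)
    (h2Z1 : ⁅X2, Z1⁆ = 0) (h2Z2 : ⁅X2, Z2⁆ = 0)
    (hli6 : LinearIndependent k ![X1, X2, X3, X4, Z1, Z2])
    (h14 : ⁅X1, X4⁆ = ε • Z2) (h24 : ⁅X2, X4⁆ = Z1) :
    ∃ a : k, a ^ 2 = ε := by
  have hZ : LinearIndependent k ![Z1, Z2] := by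
    convert hli6.comp ![4, 5] (by decide) using 1
    ext i : 1
    fin_cases i <;> rfl
  exact IsL624Realization.exists_sq_eq
    ⟨isUpperOfDepth_one_of_mem_strictUpper hX1, isUpperOfDepth_one_of_mem_strictUpper hX2,
      isUpperOfDepth_one_of_mem_strictUpper hX4, h12, h13, h23, h14, h24, h1Z1, h1Z2, h2Z1,
      h2Z2, hZ⟩
    two_ne_zero three_ne_zero

/-- If `X1, X2, X3, Z1, Z2 ∈ n_5(k)` satisfy the `L_{5,9}` relations and `X4 ∈ n_5(k)` makes
`{X1, X2, X3, X4, Z1, Z2}` linearly independent with `[X1,X4] = ε • Z2`, `[X2,X4] = Z1`,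
`[X3,X4] = 0`, `[Zj,X4] = 0`, then `ε` is a square in `k`. -/
theorem exists_sq_eq_of_L624_relations
    (k : Type*) [Field k] [CharZero k] (ε : k)
    (X1 X2 X3 Z1 Z2 X4 : Matrix (Fin 5) (Fin 5) k)
    (hX1 : X1 ∈ strictUpper k 5) (hX2 : X2 ∈ strictUpper k 5) (hX3 : X3 ∈ strictUpper k 5)
    (hZ1 : Z1 ∈ strictUpper k 5) (hZ2 : Z2 ∈ strictUpper k 5) (hX4 : X4 ∈ strictUpper k 5)
    (hli5 : LinearIndependent k ![X1, X2, X3, Z1, Z2])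
    (h12 : ⁅X1, X2⁆ = X3) (h13 : ⁅X1, X3⁆ = Z1) (h23 : ⁅X2, X3⁆ = Z2)
    (h1Z1 : ⁅X1, Z1⁆ = 0) (h1Z2 : ⁅X1, Z2⁆ = 0)
    (h2Z1 : ⁅X2, Z1⁆ = 0) (h2Z2 : ⁅X2, Z2⁆ = 0)
    (h3Z1 : ⁅X3, Z1⁆ = 0) (h3Z2 : ⁅X3, Z2⁆ = 0)
    (hli6 : LinearIndependent k ![X1, X2, X3, X4, Z1, Z2])
    (h14 : ⁅X1, X4⁆ = ε • Z2) (h24 : ⁅X2, X4⁆ = Z1) (h34 : ⁅X3, X4⁆ = 0)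
    (hZ14 : ⁅Z1, X4⁆ = 0) (hZ24 : ⁅Z2, X4⁆ = 0) :
    ∃ a : k, a ^ 2 = ε :=
  exists_sq_eq_of_L624_relations_general k ε X1 X2 X3 Z1 Z2 X4 hX1 hX2 hX4 h12 h13 h23 h1Z1 h1Z2
    h2Z1 h2Z2 hli6 h14 h24
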